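/- arXiv:1404.6037 — 2 statements merged into one kernel-verified Lean document; each statement's English description precedes it below -/
import Mathlib

section
/- The context-sharing cut rule Cut_CS is derivable in LBIZ + Cut: from Γ̃₃; Γ₁ ⊢ F and Γ₂(F; Γ₁) ⊢ H one can derive Γ₂(Γ̃₃; Γ₁) ⊢ H. -/
/-- BI formulas: propositional variables, ⊤, ⊥, ⊤*, ∧, ∨, ⊃, *, −∗. -/
inductive BI : Type
  | var : Nat → BI
  | top : BI
  | bot : BI
  | mtop : BI
  | conj : BI → BI → BI
  | disj : BI → BI → BI
  | imp : BI → BI → BI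
  | star : BI → BI → BI
  | wand : BI → BI → BI

/-- Bunches (BI structures): Γ := F | Γ; Γ | Γ, Γ. -/
inductive Bunch : Type
  | fm : BI → Bunch
  | semi : Bunch → Bunch → Bunch   -- additive ';'
  | comma : Bunch → Bunch → Bunch  -- multiplicative ','

/-- Structural congruence: full associativity and commutativity of ';' and ','. -/
inductive BunchEq : Bunch → Bunch → Prop
  | refl (Γ : Bunch) : BunchEq Γ Γ
  | symm {a b} : BunchEq a b → BunchEq b a
  | trans {a b c} : BunchEq a b → BunchEq b c → BunchEq a c
  | semiComm (a b : Bunch) : BunchEq (.semi a b) (.semi b a)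
  | semiAssoc (a b c : Bunch) : BunchEq (.semi (.semi a b) c) (.semi a (.semi b c))
  | commaComm (a b : Bunch) : BunchEq (.comma a b) (.comma b a)
  | commaAssoc (a b c : Bunch) : BunchEq (.comma (.comma a b) c) (.comma a (.comma b c))
  | semiCongr {a a' b b'} : BunchEq a a' → BunchEq b b' → BunchEq (.semi a b) (.semi a' b')
  | commaCongr {a a' b b'} : BunchEq a a' → BunchEq b b' → BunchEq (.comma a b) (.comma a' b')

/-- Bunched contexts with a single hole. -/
inductive Ctx : Type
  | hole : Ctx
  | semiL : Ctx → Bunch → Ctx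
  | semiR : Bunch → Ctx → Ctx
  | commaL : Ctx → Bunch → Ctx
  | commaR : Bunch → Ctx → Ctx

/-- Filling the hole of a context with a bunch. -/
def Ctx.fill : Ctx → Bunch → Bunch
  | .hole, Δ => Δ
  | .semiL C Γ, Δ => .semi (C.fill Δ) Γ
  | .semiR Γ C, Δ => .semi Γ (C.fill Δ)
  | .commaL C Γ, Δ => .comma (C.fill Δ) Γ
  | .commaR Γ C, Δ => .comma Γ (C.fill Δ)

/-- `osemi Γ̃ Δ` is `Γ̃; Δ`, where `Γ̃` may be empty. -/
def osemi : Option Bunch → Bunch → Bunch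
  | none, b => b
  | some a, b => .semi a b

/-- `ocomma Γ̃ Δ` is `Γ̃, Δ`, where `Γ̃` may be empty. -/
def ocomma : Option Bunch → Bunch → Bunch
  | none, b => b
  | some a, b => .comma a b

/-- The weakening preorder ⪯ on bunches: smallest reflexive (up to structural
congruence) and transitive relation with Γ(Δ) ⪯ Γ(Δ; Γ'). -/
inductive Wle : Bunch → Bunch → Prop
  | ofEq {a b} : BunchEq a b → Wle a b
  | weak (C : Ctx) (Δ Γ' : Bunch) : Wle (C.fill Δ) (C.fill (.semi Δ Γ'))
  | trans {a b c} : Wle a b → Wle b c → Wle a c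

/-- `(⊤*; Γ̃)` where `Γ̃` is possibly empty. -/
def mte : Option Bunch → Bunch
  | none => .fm .mtop
  | some Δ => .semi (.fm .mtop) Δ

/-- `Essence Γ₁ Γ₂` : Γ₂ is an essence of Γ₁. -/
inductive Essence : Bunch → Bunch → Prop
  | ofEq {a b} : BunchEq a b → Essence a b
  | insert {a} (C : Ctx) (Γ' : Bunch) (Δ : Option Bunch) :
      Essence a (C.fill Γ') → Essence a (C.fill (.comma Γ' (mte Δ)))
  | insertSemi {a} (C : Ctx) (Γ' Γ'' : Bunch) (Δ : Option Bunch) :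
      Essence a (C.fill (.semi Γ' Γ'')) →
      Essence a (C.fill (.semi (.comma Γ' (mte Δ)) Γ''))
  | congr {a b c} : Essence a b → BunchEq b c → Essence a c

/-- `Candidate Γ R₁ R₂` : (R₁, R₂) is a candidate of Γ. -/
def Candidate (Γ R₁ R₂ : Bunch) : Prop :=
  (R₂ = .fm .mtop ∧ Wle R₁ Γ) ∨ Wle (.comma R₁ R₂) Γ

/-- The representing preorder ⪯̂. -/
inductive RWle : Bunch → Bunch → Prop
  | ofEq {a b} : BunchEq a b → RWle a b
  | weak (a b : Bunch) : RWle a (.semi a b)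
  | weakComma (a b c : Bunch) : RWle (.comma a b) (.comma a (.semi b c))
  | trans {a b c} : RWle a b → RWle b c → RWle a c

/-- `RepCandidate Γ R₁ R₂` : (R₁, R₂) is a representing candidate of Γ. -/
def RepCandidate (Γ R₁ R₂ : Bunch) : Prop :=
  (R₂ = .fm .mtop ∧ RWle R₁ Γ) ∨ RWle (.comma R₁ R₂) Γ

/-- The LBIZ sequent calculus (parametrised by the candidate relation used in
*R and −∗L, and by whether the Cut rule is available), with derivation depth.
There are no structural rules; bunches are identified up to
associativity/commutativity via the depth-neutral `equiv` rule. -/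
inductive LBIZ (Cand : Bunch → Bunch → Bunch → Prop) (cut : Bool) :
    Bunch → BI → Nat → Prop
  | id (Γt : Option Bunch) (p : Nat) {Δ : Bunch} :
      Essence (osemi Γt (.fm (.var p))) Δ → LBIZ Cand cut Δ (.var p) 1
  | botL (C : Ctx) (H : BI) : LBIZ Cand cut (C.fill (.fm .bot)) H 1
  | topR (Γ : Bunch) : LBIZ Cand cut Γ .top 1
  | mtopR (Γt : Option Bunch) {Δ : Bunch} :
      Essence (osemi Γt (.fm .mtop)) Δ → LBIZ Cand cut Δ .mtop 1
  | conjL {C : Ctx} {F G H n} :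
      LBIZ Cand cut (C.fill (.semi (.fm F) (.fm G))) H n →
      LBIZ Cand cut (C.fill (.fm (.conj F G))) H (n + 1)
  | conjR {Γ F G n m} :
      LBIZ Cand cut Γ F n → LBIZ Cand cut Γ G m →
      LBIZ Cand cut Γ (.conj F G) (max n m + 1)
  | disjL {C : Ctx} {F G H n m} :
      LBIZ Cand cut (C.fill (.fm F)) H n → LBIZ Cand cut (C.fill (.fm G)) H m →
      LBIZ Cand cut (C.fill (.fm (.disj F G))) H (max n m + 1)
  | disjR₁ {Γ F G n} : LBIZ Cand cut Γ F n → LBIZ Cand cut Γ (.disj F G) (n + 1)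
  | disjR₂ {Γ F G n} : LBIZ Cand cut Γ G n → LBIZ Cand cut Γ (.disj F G) (n + 1)
  | impL (Γt : Option Bunch) {F G : BI} {Δ : Bunch} {C : Ctx} {H n m} :
      Essence (osemi Γt (.fm (.imp F G))) Δ →
      LBIZ Cand cut Δ F n →
      LBIZ Cand cut (C.fill (.semi (.fm G) Δ)) H m →
      LBIZ Cand cut (C.fill Δ) H (max n m + 1)
  | impR {Γ F G n} :
      LBIZ Cand cut (.semi Γ (.fm F)) G n → LBIZ Cand cut Γ (.imp F G) (n + 1)
  | starL {C : Ctx} {F G H n} :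
      LBIZ Cand cut (C.fill (.comma (.fm F) (.fm G))) H n →
      LBIZ Cand cut (C.fill (.fm (.star F G))) H (n + 1)
  | starR {Γ' R₁ R₂ : Bunch} {F G n m} :
      (Cand Γ' R₁ R₂ ∨ Cand Γ' R₂ R₁) →
      LBIZ Cand cut R₁ F n → LBIZ Cand cut R₂ G m →
      LBIZ Cand cut Γ' (.star F G) (max n m + 1)
  | wandL (Γ'o Rej : Option Bunch) (Rei : Bunch) (Γt : Option Bunch)
      {F G : BI} {Δ : Bunch} {C : Ctx} {H n m} :
      Essence (osemi Γt (.fm (.wand F G))) Δ →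
      ((Γ'o = none ∧ Rei = .fm .mtop ∧ Rej = none) ∨
        (∃ Γ' Rj, Γ'o = some Γ' ∧ Rej = some Rj ∧
          (Cand Γ' Rei Rj ∨ Cand Γ' Rj Rei))) →
      LBIZ Cand cut Rei F n →
      LBIZ Cand cut (C.fill (.semi (ocomma Rej (.fm G)) (ocomma Γ'o Δ))) H m →
      LBIZ Cand cut (C.fill (ocomma Γ'o Δ)) H (max n m + 1)
  | wandR {Γ F G n} :
      LBIZ Cand cut (.comma Γ (.fm F)) G n → LBIZ Cand cut Γ (.wand F G) (n + 1)
  | equiv {Γ Γ' H n} : BunchEq Γ Γ' → LBIZ Cand cut Γ H n → LBIZ Cand cut Γ' H n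
  | cutRule {Γ₁ : Bunch} {F : BI} {C : Ctx} {G n m} :
      cut = true →
      LBIZ Cand cut Γ₁ F n → LBIZ Cand cut (C.fill (.fm F)) G m →
      LBIZ Cand cut (C.fill Γ₁) G (max n m + 1)

/-- LBIZ proper: candidate relation `Candidate`, no Cut. -/
abbrev LBIZc : Bunch → BI → Nat → Prop := LBIZ Candidate false

/-- The LBI sequent calculus (without Cut), parametrised by whether contraction
is available for arbitrary bunches (`full = true`) or only for single formulas. -/
inductive LBIg (full : Bool) : Bunch → BI → Prop
  | id (F : BI) : LBIg full (.fm F) F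
  | botL (C : Ctx) (H : BI) : LBIg full (C.fill (.fm .bot)) H
  | topR (Γ : Bunch) : LBIg full Γ .top
  | mtopR : LBIg full (.fm .mtop) .mtop
  | conjL {C : Ctx} {F G H} :
      LBIg full (C.fill (.semi (.fm F) (.fm G))) H →
      LBIg full (C.fill (.fm (.conj F G))) H
  | conjR {Γ F G} : LBIg full Γ F → LBIg full Γ G → LBIg full Γ (.conj F G)
  | disjL {C : Ctx} {F G H} :
      LBIg full (C.fill (.fm F)) H → LBIg full (C.fill (.fm G)) H →
      LBIg full (C.fill (.fm (.disj F G))) H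
  | disjR₁ {Γ F G} : LBIg full Γ F → LBIg full Γ (.disj F G)
  | disjR₂ {Γ F G} : LBIg full Γ G → LBIg full Γ (.disj F G)
  | impL {Γ₁ : Bunch} {C : Ctx} {F G H} :
      LBIg full Γ₁ F → LBIg full (C.fill (.semi Γ₁ (.fm G))) H →
      LBIg full (C.fill (.semi Γ₁ (.fm (.imp F G)))) H
  | impR {Γ F G} : LBIg full (.semi Γ (.fm F)) G → LBIg full Γ (.imp F G)
  | starL {C : Ctx} {F G H} :
      LBIg full (C.fill (.comma (.fm F) (.fm G))) H →
      LBIg full (C.fill (.fm (.star F G))) H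
  | starR {Γ₁ Γ₂ F G} :
      LBIg full Γ₁ F → LBIg full Γ₂ G → LBIg full (.comma Γ₁ Γ₂) (.star F G)
  | wandL {Γ₁ : Bunch} {C : Ctx} {F G H} :
      LBIg full Γ₁ F → LBIg full (C.fill (.fm G)) H →
      LBIg full (C.fill (.comma Γ₁ (.fm (.wand F G)))) H
  | wandR {Γ F G} : LBIg full (.comma Γ (.fm F)) G → LBIg full Γ (.wand F G)
  | wk {C : Ctx} {Γ₁ Γ₂ H} :
      LBIg full (C.fill Γ₁) H → LBIg full (C.fill (.semi Γ₁ Γ₂)) H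
  | ctr {C : Ctx} {Γ₁ H} :
      (full = true ∨ ∃ A, Γ₁ = .fm A) →
      LBIg full (C.fill (.semi Γ₁ Γ₁)) H → LBIg full (C.fill Γ₁) H
  | eqAnt1a {C : Ctx} {Γ₁ H} :
      LBIg full (C.fill (.semi Γ₁ (.fm .top))) H → LBIg full (C.fill Γ₁) H
  | eqAnt1b {C : Ctx} {Γ₁ H} :
      LBIg full (C.fill Γ₁) H → LBIg full (C.fill (.semi Γ₁ (.fm .top))) H
  | eqAnt2a {C : Ctx} {Γ₁ H} :
      LBIg full (C.fill (.comma Γ₁ (.fm .mtop))) H → LBIg full (C.fill Γ₁) H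
  | eqAnt2b {C : Ctx} {Γ₁ H} :
      LBIg full (C.fill Γ₁) H → LBIg full (C.fill (.comma Γ₁ (.fm .mtop))) H
  | equiv {Γ Γ' H} : BunchEq Γ Γ' → LBIg full Γ H → LBIg full Γ' H

/-- LBI with unrestricted (structural) contraction. -/
abbrev LBI : Bunch → BI → Prop := LBIg true

/-- One application of the LBI weakening rule Wk L on a sequent
(also allowing structural-congruence adjustments). -/
inductive WkStep : Bunch × BI → Bunch × BI → Prop
  | step (C : Ctx) (Δ Γ' : Bunch) (H : BI) :
      WkStep (C.fill Δ, H) (C.fill (.semi Δ Γ'), H)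
  | equiv {Γ₁ Γ₂ : Bunch} (H : BI) : BunchEq Γ₁ Γ₂ → WkStep (Γ₁, H) (Γ₂, H)

/-- One application of Wk L or of either direction of EqAnt₂ on a sequent. -/
inductive WkEq2Step : Bunch × BI → Bunch × BI → Prop
  | wk (C : Ctx) (Δ Γ' : Bunch) (H : BI) :
      WkEq2Step (C.fill Δ, H) (C.fill (.semi Δ Γ'), H)
  | eq2a (C : Ctx) (Γ₁ : Bunch) (H : BI) :
      WkEq2Step (C.fill (.comma Γ₁ (.fm .mtop)), H) (C.fill Γ₁, H)
  | eq2b (C : Ctx) (Γ₁ : Bunch) (H : BI) :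
      WkEq2Step (C.fill Γ₁, H) (C.fill (.comma Γ₁ (.fm .mtop)), H)
  | equiv {Γ₁ Γ₂ : Bunch} (H : BI) : BunchEq Γ₁ Γ₂ → WkEq2Step (Γ₁, H) (Γ₂, H)

/-- The preorder generated by weakening together with insertion of
multiplicative-unit components. -/
inductive WleM : Bunch → Bunch → Prop
  | ofEq {a b} : BunchEq a b → WleM a b
  | weak (C : Ctx) (Δ Γ' : Bunch) : WleM (C.fill Δ) (C.fill (.semi Δ Γ'))
  | munit (C : Ctx) (Δ : Bunch) : WleM (C.fill Δ) (C.fill (.comma Δ (.fm .mtop)))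
  | trans {a b c} : WleM a b → WleM b c → WleM a c


/-!
A single Cut suffices, on the formula `F ∧ ⌜Γ₁⌝`, where `⌜Γ₁⌝` reads `;` as `∧` and `,` as `∗`.
The shared context `Γ̃₃; Γ₁` proves `F ∧ ⌜Γ₁⌝` by ∧R from the first premise and the generalized
identity `Γ̃; ⌜Γ₁⌝`, and the left rules ∧L and ∗L fold `F; Γ₁` inside `Γ₂` into `F ∧ ⌜Γ₁⌝`;
so the two copies of `Γ₁` are merged without any contraction.

The generalized identity `Γ̃; A ⊢ A` is proved by induction on `A` simultaneously with the unit
law `Γ̃; (A, ⊤*) ⊢ A`, because the right premise of −∗L puts `⊤*, G` next to the consequent `G`.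
LBIZ has no ⊤* left rule; the unit law is absorbed by the essences in the axioms, and by Cut for
a conjunction.
-/

def Derivable (Γ : Bunch) (A : BI) : Prop := ∃ n, LBIZ Candidate true Γ A n

def Ctx.comp : Ctx → Ctx → Ctx
  | .hole, E => E
  | .semiL C Γ, E => .semiL (C.comp E) Γ
  | .semiR Γ C, E => .semiR Γ (C.comp E)
  | .commaL C Γ, E => .commaL (C.comp E) Γ
  | .commaR Γ C, E => .commaR Γ (C.comp E)

@[simp]
theorem Ctx.comp_fill (C E : Ctx) (Δ : Bunch) : (C.comp E).fill Δ = C.fill (E.fill Δ) := by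
  induction C <;> simp [Ctx.comp, Ctx.fill, *]

def osemiCtx : Option Bunch → Ctx
  | none => .hole
  | some Γ => .semiR Γ .hole

@[simp]
theorem osemiCtx_fill (Γt : Option Bunch) (Δ : Bunch) : (osemiCtx Γt).fill Δ = osemi Γt Δ := by
  cases Γt <;> rfl

theorem osemi_comma_mtop_eq_fill (Γt : Option Bunch) (Δ : Bunch) :
    osemi Γt (.comma Δ (.fm .mtop)) = ((osemiCtx Γt).comp (.commaL .hole (.fm .mtop))).fill Δ := by
  simp [Ctx.fill]

theorem osemi_osemi_left (Γt : Option Bunch) (Δ Δ' : Bunch) :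
    BunchEq (osemi (some (osemi Γt Δ')) Δ) (osemi Γt (.semi Δ Δ')) := by
  cases Γt with
  | none => exact .semiComm _ _
  | some Γ => exact (BunchEq.semiAssoc Γ _ _).trans (.semiCongr (.refl Γ) (.semiComm _ _))

theorem osemi_osemi_right (Γt : Option Bunch) (Δ Δ' : Bunch) :
    BunchEq (osemi (some (osemi Γt Δ)) Δ') (osemi Γt (.semi Δ Δ')) := by
  cases Γt with
  | none => exact .refl _
  | some Γ => exact BunchEq.semiAssoc Γ _ _

theorem wle_osemi (Γt : Option Bunch) (Δ : Bunch) : Wle Δ (osemi Γt Δ) := by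
  cases Γt with
  | none => exact .ofEq (.refl _)
  | some Γ => exact (Wle.weak .hole Δ Γ).trans (.ofEq (.semiComm _ _))

theorem Essence.comma_mtop (Γt : Option Bunch) (A : BI) :
    Essence (osemi Γt (.fm A)) (osemi Γt (.comma (.fm A) (.fm .mtop))) := by
  simpa [mte] using Essence.insert (osemiCtx Γt) (.fm A) none (.ofEq (by simpa using .refl _))

theorem Essence.semi_congr_left {Δ Θ : Bunch} (h : Essence Δ Θ) (Γ : Bunch) :
    Essence (.semi Δ Γ) (.semi Θ Γ) := by
  induction h with
  | ofEq h => exact .ofEq (.semiCongr h (.refl _))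
  | insert C Γ' Δo _ ih => exact Essence.insert (.semiL C Γ) Γ' Δo ih
  | insertSemi C Γ' Γ'' Δo _ ih => exact Essence.insertSemi (.semiL C Γ) Γ' Γ'' Δo ih
  | congr _ h ih => exact .congr ih (.semiCongr h (.refl _))

theorem Essence.of_bunchEq_left {Δ Δ' Θ : Bunch} (e : BunchEq Δ' Δ) (h : Essence Δ Θ) :
    Essence Δ' Θ := by
  induction h with
  | ofEq h => exact .ofEq (e.trans h)
  | insert C Γ' Δo _ ih => exact .insert C Γ' Δo ih
  | insertSemi C Γ' Γ'' Δo _ ih => exact .insertSemi C Γ' Γ'' Δo ih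
  | congr _ h ih => exact .congr ih h

namespace Derivable

theorem equiv {Γ Γ' : Bunch} {A : BI} (e : BunchEq Γ Γ') : Derivable Γ A → Derivable Γ' A
  | ⟨n, d⟩ => ⟨n, .equiv e d⟩

theorem cut {Γ₁ : Bunch} {F G : BI} {C : Ctx} :
    Derivable Γ₁ F → Derivable (C.fill (.fm F)) G → Derivable (C.fill Γ₁) G
  | ⟨_, d₁⟩, ⟨_, d₂⟩ => ⟨_, .cutRule rfl d₁ d₂⟩

theorem imp_of_essence {B₁ B₂ : BI} (h₁ : ∀ Γt, Derivable (osemi Γt (.fm B₁)) B₁)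
    (h₂ : ∀ Γt, Derivable (osemi Γt (.fm B₂)) B₂) {Γu : Option Bunch} {Θ : Bunch}
    (he : Essence (osemi Γu (.fm (.imp B₁ B₂))) Θ) : Derivable Θ (.imp B₁ B₂) := by
  obtain ⟨_, d₁⟩ := h₁ (some Θ)
  obtain ⟨_, d₂⟩ := h₂ (some (.semi Θ (.fm B₁)))
  have he' : Essence (osemi (some (osemi Γu (.fm B₁))) (.fm (.imp B₁ B₂))) (.semi Θ (.fm B₁)) :=
    (he.semi_congr_left _).of_bunchEq_left
      ((osemi_osemi_left _ _ _).trans (osemi_osemi_right _ _ _).symm)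
  exact ⟨_, .impR (.impL (C := .hole) _ he' d₁ (.equiv (.semiComm _ _) d₂))⟩

theorem wand_of_essence {B₁ B₂ : BI} (h₁ : ∀ Γt, Derivable (osemi Γt (.fm B₁)) B₁)
    (h₂ : ∀ Γt, Derivable (osemi Γt (.comma (.fm B₂) (.fm .mtop))) B₂) {Γu : Option Bunch}
    {Θ : Bunch} (he : Essence (osemi Γu (.fm (.wand B₁ B₂))) Θ) : Derivable Θ (.wand B₁ B₂) := by
  obtain ⟨_, d₁⟩ := h₁ none
  obtain ⟨_, d₂⟩ := h₂ (some (.comma (.fm B₁) Θ))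
  have d := LBIZ.wandL (C := .hole) (some (.fm B₁)) (some (.fm .mtop)) (.fm B₁) Γu he
    (.inr ⟨_, _, rfl, rfl, .inl (.inl ⟨rfl, .ofEq (.refl _)⟩)⟩) d₁
    (.equiv ((BunchEq.semiComm _ _).trans (.semiCongr (.commaComm _ _) (.refl _))) d₂)
  exact ⟨_, .wandR (.equiv (.commaComm _ _) d)⟩

end Derivable

theorem derivable_id_and_unit (A : BI) :
    (∀ Γt, Derivable (osemi Γt (.fm A)) A) ∧
      ∀ Γt, Derivable (osemi Γt (.comma (.fm A) (.fm .mtop))) A := by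
  induction A with
  | var p =>
    exact ⟨fun Γt => ⟨1, .id Γt p (.ofEq (.refl _))⟩, fun Γt => ⟨1, .id Γt p (.comma_mtop Γt _)⟩⟩
  | top => exact ⟨fun _ => ⟨1, .topR _⟩, fun _ => ⟨1, .topR _⟩⟩
  | bot =>
    refine ⟨fun Γt => ?_, fun Γt => ?_⟩
    · rw [← osemiCtx_fill]; exact ⟨1, .botL _ _⟩
    · rw [osemi_comma_mtop_eq_fill]; exact ⟨1, .botL _ _⟩
  | mtop =>
    exact ⟨fun Γt => ⟨1, .mtopR Γt (.ofEq (.refl _))⟩, fun Γt => ⟨1, .mtopR Γt (.comma_mtop Γt _)⟩⟩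
  | conj B₁ B₂ ih₁ ih₂ =>
    have left (Γt : Option Bunch) : Derivable (osemi Γt (.semi (.fm B₁) (.fm B₂))) B₁ :=
      (ih₁.1 (some (osemi Γt (.fm B₂)))).equiv (osemi_osemi_left _ _ _)
    have right (Γt : Option Bunch) : Derivable (osemi Γt (.semi (.fm B₁) (.fm B₂))) B₂ :=
      (ih₂.1 (some (osemi Γt (.fm B₁)))).equiv (osemi_osemi_right _ _ _)
    refine ⟨fun Γt => ?_, fun Γt => ?_⟩
    · obtain ⟨_, d₁⟩ := left Γt
      obtain ⟨_, d₂⟩ := right Γt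
      rw [← osemiCtx_fill] at d₁ d₂ ⊢
      exact ⟨_, .conjL (.conjR d₁ d₂)⟩
    · -- the unit is absorbed by cutting `B₁ ∧ B₂ ⊢ Bᵢ` into the unit law of `Bᵢ`
      obtain ⟨_, d₁⟩ := left none
      obtain ⟨_, d₂⟩ := right none
      have e₁ := ih₁.2 Γt
      have e₂ := ih₂.2 Γt
      rw [osemi_comma_mtop_eq_fill] at e₁ e₂ ⊢
      obtain ⟨_, c₁⟩ := Derivable.cut ⟨_, LBIZ.conjL (C := .hole) d₁⟩ e₁
      obtain ⟨_, c₂⟩ := Derivable.cut ⟨_, LBIZ.conjL (C := .hole) d₂⟩ e₂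
      exact ⟨_, .conjR c₁ c₂⟩
  | disj B₁ B₂ ih₁ ih₂ =>
    refine ⟨fun Γt => ?_, fun Γt => ?_⟩
    · obtain ⟨_, d₁⟩ := ih₁.1 Γt
      obtain ⟨_, d₂⟩ := ih₂.1 Γt
      rw [← osemiCtx_fill] at d₁ d₂ ⊢
      exact ⟨_, .disjL (.disjR₁ d₁) (.disjR₂ d₂)⟩
    · obtain ⟨_, d₁⟩ := ih₁.2 Γt
      obtain ⟨_, d₂⟩ := ih₂.2 Γt
      rw [osemi_comma_mtop_eq_fill] at d₁ d₂ ⊢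
      exact ⟨_, .disjL (.disjR₁ d₁) (.disjR₂ d₂)⟩
  | imp B₁ B₂ ih₁ ih₂ =>
    exact ⟨fun Γt => .imp_of_essence ih₁.1 ih₂.1 (.ofEq (.refl (osemi Γt _))),
      fun Γt => .imp_of_essence ih₁.1 ih₂.1 (.comma_mtop Γt _)⟩
  | star B₁ B₂ ih₁ ih₂ =>
    obtain ⟨_, d₂⟩ := ih₂.1 none
    refine ⟨fun Γt => ?_, fun Γt => ?_⟩
    · obtain ⟨_, d₁⟩ := ih₁.1 none
      have cand : Candidate (osemi Γt (.comma (.fm B₁) (.fm B₂))) (.fm B₁) (.fm B₂) :=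
        .inr (wle_osemi Γt _)
      rw [← osemiCtx_fill] at cand ⊢
      exact ⟨_, .starL (.starR (.inl cand) d₁ d₂)⟩
    · obtain ⟨_, d₁⟩ := ih₁.2 none
      have e : BunchEq (.comma (.comma (.fm B₁) (.fm .mtop)) (.fm B₂))
          (.comma (.comma (.fm B₁) (.fm B₂)) (.fm .mtop)) :=
        (BunchEq.commaAssoc _ _ _).trans
          ((BunchEq.commaCongr (.refl _) (.commaComm _ _)).trans (.symm (.commaAssoc _ _ _)))
      have cand : Candidate (osemi Γt (.comma (.comma (.fm B₁) (.fm B₂)) (.fm .mtop)))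
          (.comma (.fm B₁) (.fm .mtop)) (.fm B₂) :=
        .inr ((Wle.ofEq e).trans (wle_osemi Γt _))
      rw [osemi_comma_mtop_eq_fill] at cand ⊢
      exact ⟨_, .starL (.starR (.inl cand) d₁ d₂)⟩
  | wand B₁ B₂ ih₁ ih₂ =>
    exact ⟨fun Γt => .wand_of_essence ih₁.1 ih₂.2 (.ofEq (.refl (osemi Γt _))),
      fun Γt => .wand_of_essence ih₁.1 ih₂.2 (.comma_mtop Γt _)⟩

def Bunch.toFormula : Bunch → BI
  | .fm A => A
  | .semi Γ Δ => .conj Γ.toFormula Δ.toFormula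
  | .comma Γ Δ => .star Γ.toFormula Δ.toFormula

theorem derivable_toFormula (Γ : Bunch) (Γt : Option Bunch) :
    Derivable (osemi Γt Γ) Γ.toFormula := by
  induction Γ generalizing Γt with
  | fm A => exact (derivable_id_and_unit A).1 Γt
  | semi Γ Δ ihΓ ihΔ =>
    obtain ⟨_, d₁⟩ := (ihΓ (some (osemi Γt Δ))).equiv (osemi_osemi_left _ _ _)
    obtain ⟨_, d₂⟩ := (ihΔ (some (osemi Γt Γ))).equiv (osemi_osemi_right _ _ _)
    exact ⟨_, .conjR d₁ d₂⟩
  | comma Γ Δ ihΓ ihΔ =>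
    obtain ⟨_, d₁⟩ := ihΓ none
    obtain ⟨_, d₂⟩ := ihΔ none
    exact ⟨_, .starR (.inl (.inr (wle_osemi Γt _))) d₁ d₂⟩

theorem LBIZ.fill_toFormula {Cand : Bunch → Bunch → Bunch → Prop} {cut : Bool} {Γ : Bunch}
    {H : BI} {C : Ctx} {n : ℕ} (d : LBIZ Cand cut (C.fill Γ) H n) :
    ∃ m, LBIZ Cand cut (C.fill (.fm Γ.toFormula)) H m := by
  induction Γ generalizing C n with
  | fm A => exact ⟨n, d⟩
  | semi Γ Δ ihΓ ihΔ =>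
    obtain ⟨_, d₁⟩ := ihΓ (C := C.comp (.semiL .hole Δ)) (by simpa [Ctx.fill] using d)
    obtain ⟨_, d₂⟩ := ihΔ (C := C.comp (.semiR (.fm Γ.toFormula) .hole))
      (by simpa [Ctx.fill] using d₁)
    exact ⟨_, .conjL (by simpa [Ctx.fill] using d₂)⟩
  | comma Γ Δ ihΓ ihΔ =>
    obtain ⟨_, d₁⟩ := ihΓ (C := C.comp (.commaL .hole Δ)) (by simpa [Ctx.fill] using d)
    obtain ⟨_, d₂⟩ := ihΔ (C := C.comp (.commaR (.fm Γ.toFormula) .hole))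
      (by simpa [Ctx.fill] using d₁)
    exact ⟨_, .starL (by simpa [Ctx.fill] using d₂)⟩

/-- the context-sharing cut rule Cut_CS is derivable in
LBIZ + Cut. -/
theorem lbiz_cutcs_derivable (Γ₃ : Option Bunch) (Γ₁ : Bunch) (F H : BI)
    (C : Ctx)
    (h₁ : ∃ n, LBIZ Candidate true (osemi Γ₃ Γ₁) F n)
    (h₂ : ∃ n, LBIZ Candidate true (C.fill (.semi (.fm F) Γ₁)) H n) :
    ∃ n, LBIZ Candidate true (C.fill (osemi Γ₃ Γ₁)) H n := by
  have shared : Derivable (osemi Γ₃ Γ₁) (.conj F Γ₁.toFormula) := by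
    obtain ⟨_, d₁⟩ := h₁
    obtain ⟨_, d₂⟩ := derivable_toFormula Γ₁ Γ₃
    exact ⟨_, .conjR d₁ d₂⟩
  have packed : Derivable (C.fill (.fm (.conj F Γ₁.toFormula))) H := by
    obtain ⟨_, d₂⟩ := h₂
    obtain ⟨_, d⟩ := LBIZ.fill_toFormula (C := C.comp (.semiR (.fm F) .hole))
      (by simpa [Ctx.fill] using d₂)
    exact ⟨_, .conjL (by simpa [Ctx.fill] using d)⟩
  exact shared.cut packed
end

section
/- In LBIZ, the identity axiom generalizes from propositional variables to all formulas: for every BI formula F and every essence E(Γ̃; F) of a bunch of the form Γ̃; F, the sequent E(Γ̃; F) ⊢ F is derivable in LBIZ. -/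
/-! An essence of `Γ̃; H` is `C[H]` for a context `C` such that `C[Y]` is an essence of `Γ̃; Y`
for every bunch `Y`, and such that the comma spine of `C` (the `,`-nodes on the path to the hole)
around `Y` is an essence of `Y`: the occurrence of `H` can be followed through every congruence
and insertion step. With this, each connective of `F` is introduced by its left rule at that
occurrence and then by its right rule; for `*` the comma spine supplies the candidate for `*R`,
and `⊃`, `−∗` are handled by `⊃L`, `−∗L` applied to the whole antecedent. -/

open Relation

namespace Ctx

def comp_s19 : Ctx → Ctx → Ctx
  | hole, D => D
  | semiL C b, D => semiL (C.comp_s19 D) b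
  | semiR b C, D => semiR b (C.comp_s19 D)
  | commaL C b, D => commaL (C.comp_s19 D) b
  | commaR b C, D => commaR b (C.comp_s19 D)

@[simp]
theorem fill_comp (C D : Ctx) (X : Bunch) : (C.comp_s19 D).fill X = C.fill (D.fill X) := by
  induction C <;> simp [comp_s19, fill, *]

def commaSpine : Ctx → Ctx
  | hole => hole
  | semiL C _ => C.commaSpine
  | semiR _ C => C.commaSpine
  | commaL C b => commaL C.commaSpine b
  | commaR b C => commaR b C.commaSpine

def osemi : Option Bunch → Ctx
  | none => hole
  | some Γ => semiR Γ hole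

@[simp]
theorem osemi_fill (Γt : Option Bunch) (X : Bunch) : (osemi Γt).fill X = _root_.osemi Γt X := by
  cases Γt <;> rfl

@[simp]
theorem commaSpine_osemi (Γt : Option Bunch) : (osemi Γt).commaSpine = hole := by
  cases Γt <;> rfl

end Ctx

namespace BunchEq

theorem fill (C : Ctx) {a b : Bunch} (h : BunchEq a b) : BunchEq (C.fill a) (C.fill b) := by
  induction C with
  | hole => exact h
  | semiL C c ih => exact semiCongr ih (refl c)
  | semiR c C ih => exact semiCongr (refl c) ih
  | commaL C c ih => exact commaCongr ih (refl c)
  | commaR c C ih => exact commaCongr (refl c) ih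

theorem osemi_semi (Γt : Option Bunch) (X Y : Bunch) :
    BunchEq (osemi Γt (.semi X Y)) (.semi (osemi Γt X) Y) := by
  cases Γt with
  | none => exact refl _
  | some Γ => exact symm (semiAssoc Γ X Y)

theorem semi_osemi_comm (Γt : Option Bunch) (X Y : Bunch) :
    BunchEq (.semi (osemi Γt X) Y) (.semi (osemi Γt Y) X) := by
  have h := (semiComm X Y).fill (Ctx.osemi Γt)
  rw [Ctx.osemi_fill, Ctx.osemi_fill] at h
  exact trans (symm (osemi_semi Γt X Y)) (trans h (osemi_semi Γt Y X))

theorem commaSpine_fill_comma (C : Ctx) (X Y : Bunch) :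
    BunchEq (C.commaSpine.fill (.comma X Y)) (.comma X (C.commaSpine.fill Y)) := by
  induction C with
  | hole => exact refl _
  | semiL C c ih => exact ih
  | semiR c C ih => exact ih
  | commaL C c ih => exact trans (commaCongr ih (refl c)) (commaAssoc _ _ _)
  | commaR c C ih =>
    refine trans (commaCongr (refl c) ih) (trans (symm (commaAssoc _ _ _)) ?_)
    exact trans (commaCongr (commaComm _ _) (refl _)) (commaAssoc _ _ _)

end BunchEq

theorem Wle.fill (C : Ctx) {a b : Bunch} (h : Wle a b) : Wle (C.fill a) (C.fill b) := by
  induction h with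
  | ofEq e => exact ofEq (e.fill C)
  | weak C₀ Δ Γ' => simpa using weak (C.comp_s19 C₀) Δ Γ'
  | trans _ _ ih₁ ih₂ => exact ih₁.trans ih₂

theorem Wle.commaSpine_fill (C : Ctx) (Y : Bunch) : Wle (C.commaSpine.fill Y) (C.fill Y) := by
  induction C with
  | hole => exact ofEq (.refl _)
  | semiL C c ih => exact ih.trans (weak .hole _ c)
  | semiR c C ih => exact ih.trans ((weak .hole _ c).trans (ofEq (.semiComm _ _)))
  | commaL C c ih => exact ih.fill (.commaL .hole c)
  | commaR c C ih => exact ih.fill (.commaR c .hole)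

def InsertStep (X X' : Bunch) : Prop :=
  ∃ (C : Ctx) (Γ' : Bunch) (m : Option Bunch),
    X = C.fill Γ' ∧ X' = C.fill (.comma Γ' (mte m))

theorem InsertStep.fill (D : Ctx) {X X' : Bunch} :
    InsertStep X X' → InsertStep (D.fill X) (D.fill X')
  | ⟨C, Γ', m, hX, hX'⟩ => ⟨D.comp_s19 C, Γ', m, by simp [hX], by simp [hX']⟩

namespace Essence

theorem of_bunchEq_left_s19 {a a' b : Bunch} (e : BunchEq a a') (h : Essence a' b) :
    Essence a b := by
  induction h with
  | ofEq e' => exact ofEq (e.trans e')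
  | insert C Γ' Δ _ ih => exact insert C Γ' Δ ih
  | insertSemi C Γ' Γ'' Δ _ ih => exact insertSemi C Γ' Γ'' Δ ih
  | congr _ e' ih => exact congr ih e'

theorem semi_right {a b : Bunch} (c : Bunch) (h : Essence a b) :
    Essence (.semi a c) (.semi b c) := by
  induction h with
  | ofEq e => exact ofEq (e.semiCongr (.refl c))
  | insert C Γ' Δ _ ih => exact insert (.semiL C c) Γ' Δ ih
  | insertSemi C Γ' Γ'' Δ _ ih => exact insertSemi (.semiL C c) Γ' Γ'' Δ ih
  | congr _ e ih => exact congr ih (e.semiCongr (.refl c))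

theorem of_insertSteps {a X X' : Bunch} (h : Essence a X) (hX : ReflTransGen InsertStep X X') :
    Essence a X' := by
  induction hX with
  | refl => exact h
  | tail _ hs ih =>
    obtain ⟨C, Γ', m, rfl, rfl⟩ := hs
    exact insert C Γ' m ih

end Essence

def TracksOccurrence (R : Bunch → Bunch → Prop) (H : BI) (a b : Bunch) : Prop :=
  ∀ C₀ : Ctx, a = C₀.fill (.fm H) → ∃ C : Ctx, b = C.fill (.fm H) ∧
    ∀ Y, R (C₀.fill Y) (C.fill Y) ∧ R (C₀.commaSpine.fill Y) (C.commaSpine.fill Y)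

namespace TracksOccurrence

variable {H : BI}

theorem refl (a : Bunch) : TracksOccurrence BunchEq H a a :=
  fun C₀ h => ⟨C₀, h, fun _ => ⟨.refl _, .refl _⟩⟩

theorem trans {a b c : Bunch} (h₁ : TracksOccurrence BunchEq H a b)
    (h₂ : TracksOccurrence BunchEq H b c) : TracksOccurrence BunchEq H a c := by
  intro C₀ h
  obtain ⟨C₁, hb, e₁⟩ := h₁ C₀ h
  obtain ⟨C₂, hc, e₂⟩ := h₂ C₁ hb
  exact ⟨C₂, hc, fun Y => ⟨(e₁ Y).1.trans (e₂ Y).1, (e₁ Y).2.trans (e₂ Y).2⟩⟩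

theorem semiComm (a b : Bunch) : TracksOccurrence BunchEq H (.semi a b) (.semi b a) := by
  rintro (_ | ⟨D, _⟩ | ⟨_, D⟩ | _ | _) h <;>
    simp only [Ctx.fill, Bunch.semi.injEq, reduceCtorEq] at h
  · obtain ⟨rfl, rfl⟩ := h
    exact ⟨.semiR b D, rfl, fun _ => ⟨.semiComm _ _, .refl _⟩⟩
  · obtain ⟨rfl, rfl⟩ := h
    exact ⟨.semiL D a, rfl, fun _ => ⟨.semiComm _ _, .refl _⟩⟩

theorem commaComm (a b : Bunch) : TracksOccurrence BunchEq H (.comma a b) (.comma b a) := by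
  rintro (_ | _ | _ | ⟨D, _⟩ | ⟨_, D⟩) h <;>
    simp only [Ctx.fill, Bunch.comma.injEq, reduceCtorEq] at h
  · obtain ⟨rfl, rfl⟩ := h
    exact ⟨.commaR b D, rfl, fun _ => ⟨.commaComm _ _, .commaComm _ _⟩⟩
  · obtain ⟨rfl, rfl⟩ := h
    exact ⟨.commaL D a, rfl, fun _ => ⟨.commaComm _ _, .commaComm _ _⟩⟩

theorem semiAssoc (a b c : Bunch) :
    TracksOccurrence BunchEq H (.semi (.semi a b) c) (.semi a (.semi b c)) := by
  rintro (_ | ⟨_ | ⟨D, _⟩ | ⟨_, D⟩ | _ | _, _⟩ | ⟨_, D⟩ | _ | _) h <;>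
    simp only [Ctx.fill, Bunch.semi.injEq, reduceCtorEq, false_and] at h
  · obtain ⟨⟨rfl, rfl⟩, rfl⟩ := h
    exact ⟨.semiL D (.semi b c), rfl, fun _ => ⟨.semiAssoc _ _ _, .refl _⟩⟩
  · obtain ⟨⟨rfl, rfl⟩, rfl⟩ := h
    exact ⟨.semiR a (.semiL D c), rfl, fun _ => ⟨.semiAssoc _ _ _, .refl _⟩⟩
  · obtain ⟨rfl, rfl⟩ := h
    exact ⟨.semiR a (.semiR b D), rfl, fun _ => ⟨.semiAssoc _ _ _, .refl _⟩⟩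

theorem commaAssoc (a b c : Bunch) :
    TracksOccurrence BunchEq H (.comma (.comma a b) c) (.comma a (.comma b c)) := by
  rintro (_ | _ | _ | ⟨_ | _ | _ | ⟨D, _⟩ | ⟨_, D⟩, _⟩ | ⟨_, D⟩) h <;>
    simp only [Ctx.fill, Bunch.comma.injEq, reduceCtorEq, false_and] at h
  · obtain ⟨⟨rfl, rfl⟩, rfl⟩ := h
    exact ⟨.commaL D (.comma b c), rfl, fun _ => ⟨.commaAssoc _ _ _, .commaAssoc _ _ _⟩⟩
  · obtain ⟨⟨rfl, rfl⟩, rfl⟩ := h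
    exact ⟨.commaR a (.commaL D c), rfl, fun _ => ⟨.commaAssoc _ _ _, .commaAssoc _ _ _⟩⟩
  · obtain ⟨rfl, rfl⟩ := h
    exact ⟨.commaR a (.commaR b D), rfl, fun _ => ⟨.commaAssoc _ _ _, .commaAssoc _ _ _⟩⟩

-- `a; (b; c)` ↦ `(b; c); a` ↦ `b; (c; a)` ↦ `(c; a); b` ↦ `c; (a; b)` ↦ `(a; b); c`
theorem semiAssoc_symm (a b c : Bunch) :
    TracksOccurrence BunchEq H (.semi a (.semi b c)) (.semi (.semi a b) c) :=
  (semiComm _ _).trans <| (semiAssoc _ _ _).trans <| (semiComm _ _).trans <|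
    (semiAssoc _ _ _).trans (semiComm _ _)

theorem commaAssoc_symm (a b c : Bunch) :
    TracksOccurrence BunchEq H (.comma a (.comma b c)) (.comma (.comma a b) c) :=
  (commaComm _ _).trans <| (commaAssoc _ _ _).trans <| (commaComm _ _).trans <|
    (commaAssoc _ _ _).trans (commaComm _ _)

theorem semiCongr {a a' b b' : Bunch} (ea : BunchEq a a') (eb : BunchEq b b')
    (ha : TracksOccurrence BunchEq H a a') (hb : TracksOccurrence BunchEq H b b') :
    TracksOccurrence BunchEq H (.semi a b) (.semi a' b') := by
  rintro (_ | ⟨D, _⟩ | ⟨_, D⟩ | _ | _) h <;>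
    simp only [Ctx.fill, Bunch.semi.injEq, reduceCtorEq] at h
  · obtain ⟨hD, rfl⟩ := h
    obtain ⟨C, rfl, e⟩ := ha D hD
    exact ⟨.semiL C b', rfl, fun Y => ⟨(e Y).1.semiCongr eb, (e Y).2⟩⟩
  · obtain ⟨rfl, hD⟩ := h
    obtain ⟨C, rfl, e⟩ := hb D hD
    exact ⟨.semiR a' C, rfl, fun Y => ⟨ea.semiCongr (e Y).1, (e Y).2⟩⟩

theorem commaCongr {a a' b b' : Bunch} (ea : BunchEq a a') (eb : BunchEq b b')
    (ha : TracksOccurrence BunchEq H a a') (hb : TracksOccurrence BunchEq H b b') :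
    TracksOccurrence BunchEq H (.comma a b) (.comma a' b') := by
  rintro (_ | _ | _ | ⟨D, _⟩ | ⟨_, D⟩) h <;>
    simp only [Ctx.fill, Bunch.comma.injEq, reduceCtorEq] at h
  · obtain ⟨hD, rfl⟩ := h
    obtain ⟨C, rfl, e⟩ := ha D hD
    exact ⟨.commaL C b', rfl, fun Y => ⟨(e Y).1.commaCongr eb, (e Y).2.commaCongr eb⟩⟩
  · obtain ⟨rfl, hD⟩ := h
    obtain ⟨C, rfl, e⟩ := hb D hD
    exact ⟨.commaR a' C, rfl, fun Y => ⟨ea.commaCongr (e Y).1, ea.commaCongr (e Y).2⟩⟩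

end TracksOccurrence

theorem BunchEq.tracksOccurrence {a b : Bunch} (h : BunchEq a b) (H : BI) :
    TracksOccurrence BunchEq H a b ∧ TracksOccurrence BunchEq H b a := by
  induction h with
  | refl a => exact ⟨.refl a, .refl a⟩
  | symm _ ih => exact ih.symm
  | trans _ _ ih₁ ih₂ => exact ⟨ih₁.1.trans ih₂.1, ih₂.2.trans ih₁.2⟩
  | semiComm a b => exact ⟨.semiComm a b, .semiComm b a⟩
  | semiAssoc a b c => exact ⟨.semiAssoc a b c, .semiAssoc_symm a b c⟩
  | commaComm a b => exact ⟨.commaComm a b, .commaComm b a⟩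
  | commaAssoc a b c => exact ⟨.commaAssoc a b c, .commaAssoc_symm a b c⟩
  | semiCongr ea eb iha ihb =>
    exact ⟨.semiCongr ea eb iha.1 ihb.1, .semiCongr ea.symm eb.symm iha.2 ihb.2⟩
  | commaCongr ea eb iha ihb =>
    exact ⟨.commaCongr ea eb iha.1 ihb.1, .commaCongr ea.symm eb.symm iha.2 ihb.2⟩

theorem InsertStep.reflTransGen_fill (D : Ctx) {X X' : Bunch}
    (h : ReflTransGen InsertStep X X') : ReflTransGen InsertStep (D.fill X) (D.fill X') :=
  ReflTransGen.lift D.fill (fun _ _ => InsertStep.fill D) _ _ h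

-- The insertion point either lies on the path to `H`, or beside it, and then the same insertion
-- is made in `C[Y]` (and in its comma spine when it hangs off a `,`-node).
theorem TracksOccurrence.insert {H : BI} (C' : Ctx) (Γ' : Bunch) (m : Option Bunch) :
    TracksOccurrence (ReflTransGen InsertStep) H (C'.fill Γ') (C'.fill (.comma Γ' (mte m))) := by
  induction C' with
  | hole =>
    rintro C rfl
    exact ⟨.commaL C (mte m), rfl,
      fun _ => ⟨.single ⟨.hole, _, m, rfl, rfl⟩, .single ⟨.hole, _, m, rfl, rfl⟩⟩⟩
  | semiL C' b ih =>
    rintro (_ | ⟨C, _⟩ | ⟨_, C⟩ | _ | _) h <;>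
      simp only [Ctx.fill, Bunch.semi.injEq, reduceCtorEq] at h
    · obtain ⟨hC, rfl⟩ := h
      obtain ⟨Cn, hCn, e⟩ := ih C hC
      exact ⟨.semiL Cn b, by rw [Ctx.fill, hCn]; rfl,
        fun Y => ⟨InsertStep.reflTransGen_fill (.semiL .hole b) (e Y).1, (e Y).2⟩⟩
    · obtain ⟨rfl, rfl⟩ := h
      exact ⟨.semiR _ C, rfl,
        fun Y => ⟨.single ⟨.semiL C' (C.fill Y), Γ', m, rfl, rfl⟩, .refl⟩⟩
  | semiR b C' ih =>
    rintro (_ | ⟨C, _⟩ | ⟨_, C⟩ | _ | _) h <;>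
      simp only [Ctx.fill, Bunch.semi.injEq, reduceCtorEq] at h
    · obtain ⟨rfl, rfl⟩ := h
      exact ⟨.semiL C _, rfl,
        fun Y => ⟨.single ⟨.semiR (C.fill Y) C', Γ', m, rfl, rfl⟩, .refl⟩⟩
    · obtain ⟨rfl, hC⟩ := h
      obtain ⟨Cn, hCn, e⟩ := ih C hC
      exact ⟨.semiR b Cn, by rw [Ctx.fill, hCn]; rfl,
        fun Y => ⟨InsertStep.reflTransGen_fill (.semiR b .hole) (e Y).1, (e Y).2⟩⟩
  | commaL C' b ih =>
    rintro (_ | _ | _ | ⟨C, _⟩ | ⟨_, C⟩) h <;>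
      simp only [Ctx.fill, Bunch.comma.injEq, reduceCtorEq] at h
    · obtain ⟨hC, rfl⟩ := h
      obtain ⟨Cn, hCn, e⟩ := ih C hC
      exact ⟨.commaL Cn b, by rw [Ctx.fill, hCn]; rfl,
        fun Y => ⟨InsertStep.reflTransGen_fill (.commaL .hole b) (e Y).1,
          InsertStep.reflTransGen_fill (.commaL .hole b) (e Y).2⟩⟩
    · obtain ⟨rfl, rfl⟩ := h
      exact ⟨.commaR _ C, rfl, fun Y => ⟨.single ⟨.commaL C' (C.fill Y), Γ', m, rfl, rfl⟩,
        .single ⟨.commaL C' (C.commaSpine.fill Y), Γ', m, rfl, rfl⟩⟩⟩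
  | commaR b C' ih =>
    rintro (_ | _ | _ | ⟨C, _⟩ | ⟨_, C⟩) h <;>
      simp only [Ctx.fill, Bunch.comma.injEq, reduceCtorEq] at h
    · obtain ⟨rfl, rfl⟩ := h
      exact ⟨.commaL C _, rfl, fun Y => ⟨.single ⟨.commaR (C.fill Y) C', Γ', m, rfl, rfl⟩,
        .single ⟨.commaR (C.commaSpine.fill Y) C', Γ', m, rfl, rfl⟩⟩⟩
    · obtain ⟨rfl, hC⟩ := h
      obtain ⟨Cn, hCn, e⟩ := ih C hC
      exact ⟨.commaR b Cn, by rw [Ctx.fill, hCn]; rfl,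
        fun Y => ⟨InsertStep.reflTransGen_fill (.commaR b .hole) (e Y).1,
          InsertStep.reflTransGen_fill (.commaR b .hole) (e Y).2⟩⟩

def IsEssenceCtx (Γt : Option Bunch) (C : Ctx) : Prop :=
  (∀ Y, Essence (osemi Γt Y) (C.fill Y)) ∧ ∀ Y, Essence Y (C.commaSpine.fill Y)

theorem IsEssenceCtx.osemi (Γt : Option Bunch) : IsEssenceCtx Γt (Ctx.osemi Γt) :=
  ⟨fun Y => by simpa using Essence.ofEq (.refl _),
    fun Y => by rw [Ctx.commaSpine_osemi]; exact .ofEq (.refl Y)⟩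

theorem IsEssenceCtx.of_tracksOccurrence {R : Bunch → Bunch → Prop}
    (hR : ∀ {a X X'}, Essence a X → R X X' → Essence a X') {Γt : Option Bunch} {C : Ctx}
    {H : BI} {Δ Δ' : Bunch} (hC : IsEssenceCtx Γt C) (hΔ : Δ = C.fill (.fm H))
    (ht : TracksOccurrence R H Δ Δ') : ∃ C', Δ' = C'.fill (.fm H) ∧ IsEssenceCtx Γt C' := by
  obtain ⟨C', rfl, e⟩ := ht C hΔ
  exact ⟨C', rfl, fun Y => hR (hC.1 Y) (e Y).1, fun Y => hR (hC.2 Y) (e Y).2⟩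

theorem Essence.exists_isEssenceCtx {Γt : Option Bunch} {H : BI} {Δ : Bunch}
    (h : Essence (osemi Γt (.fm H)) Δ) : ∃ C, Δ = C.fill (.fm H) ∧ IsEssenceCtx Γt C := by
  generalize ha : osemi Γt (.fm H) = a at h
  induction h with
  | ofEq e =>
    exact (IsEssenceCtx.osemi Γt).of_tracksOccurrence (fun h e => h.congr e)
      (by simp [ha]) (e.tracksOccurrence H).1
  | insert C' Γ' m _ ih =>
    obtain ⟨C, hΔ, hC⟩ := ih
    exact hC.of_tracksOccurrence (fun h s => h.of_insertSteps s) hΔ (.insert C' Γ' m)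
  | insertSemi C' Γ' Γ'' m _ ih =>
    obtain ⟨C, hΔ, hC⟩ := ih
    have ht := TracksOccurrence.insert (H := H) (C'.comp_s19 (.semiL .hole Γ'')) Γ' m
    simp only [Ctx.fill_comp, Ctx.fill] at ht
    exact hC.of_tracksOccurrence (fun h s => h.of_insertSteps s) hΔ ht
  | congr _ e ih =>
    obtain ⟨C, hΔ, hC⟩ := ih
    exact hC.of_tracksOccurrence (fun h e => h.congr e) hΔ (e.tracksOccurrence H).1

def IdDerivable (F : BI) : Prop :=
  ∀ (Γt : Option Bunch) (Δ : Bunch), Essence (osemi Γt (.fm F)) Δ → ∃ n, LBIZc Δ F n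

namespace IdDerivable

theorem var (p : Nat) : IdDerivable (.var p) :=
  fun Γt _ h => ⟨1, .id Γt p h⟩

theorem top : IdDerivable .top :=
  fun _ Δ _ => ⟨1, .topR Δ⟩

theorem bot : IdDerivable .bot := by
  intro Γt Δ h
  obtain ⟨C, rfl, -⟩ := h.exists_isEssenceCtx
  exact ⟨1, .botL C .bot⟩

theorem mtop : IdDerivable .mtop :=
  fun Γt _ h => ⟨1, .mtopR Γt h⟩

variable {F G : BI}

theorem conj (hF : IdDerivable F) (hG : IdDerivable G) : IdDerivable (.conj F G) := by
  intro Γt Δ h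
  obtain ⟨C, rfl, hC, -⟩ := h.exists_isEssenceCtx
  have hFG := (hC (.semi (.fm F) (.fm G))).of_bunchEq_left_s19 (.symm (.osemi_semi Γt _ _))
  obtain ⟨_, dF⟩ := hF (some (osemi Γt (.fm G))) _ (hFG.of_bunchEq_left_s19 (.semi_osemi_comm ..))
  obtain ⟨_, dG⟩ := hG (some (osemi Γt (.fm F))) _ hFG
  exact ⟨_, .conjL (.conjR dF dG)⟩

theorem disj (hF : IdDerivable F) (hG : IdDerivable G) : IdDerivable (.disj F G) := by
  intro Γt Δ h
  obtain ⟨C, rfl, hC, -⟩ := h.exists_isEssenceCtx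
  obtain ⟨_, dF⟩ := hF Γt _ (hC (.fm F))
  obtain ⟨_, dG⟩ := hG Γt _ (hC (.fm G))
  exact ⟨_, .disjL (.disjR₁ dF) (.disjR₂ dG)⟩

theorem imp (hF : IdDerivable F) (hG : IdDerivable G) : IdDerivable (.imp F G) := by
  intro Γt Δ h
  have hΔF := h.semi_right (.fm F)
  obtain ⟨_, dF⟩ := hF (some (osemi Γt (.fm (.imp F G)))) _ hΔF
  obtain ⟨_, dG⟩ := hG (some (.semi Δ (.fm F))) (.semi (.fm G) (.semi Δ (.fm F)))
    (.ofEq (.semiComm _ _))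
  have hImp := hΔF.of_bunchEq_left_s19 (.semi_osemi_comm Γt (.fm F) (.fm (.imp F G)))
  exact ⟨_, .impR (.impL (C := .hole) (some (osemi Γt (.fm F))) hImp dF dG)⟩

theorem star (hF : IdDerivable F) (hG : IdDerivable G) : IdDerivable (.star F G) := by
  intro Γt Δ h
  obtain ⟨C, rfl, -, hC⟩ := h.exists_isEssenceCtx
  obtain ⟨_, dF⟩ := hF none (.fm F) (.ofEq (.refl _))
  obtain ⟨_, dG⟩ := hG none _ (hC (.fm G))
  have cand : Candidate (C.fill (.comma (.fm F) (.fm G))) (.fm F) (C.commaSpine.fill (.fm G)) :=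
    .inr ((Wle.ofEq (BunchEq.commaSpine_fill_comma C _ _).symm).trans (.commaSpine_fill C _))
  exact ⟨_, .starL (.starR (.inl cand) dF dG)⟩

/-- `−∗L` with `Γ' := F` and `R := (F, ⊤*)` reduces `Δ, F ⊢ G` to `F ⊢ F` and
`(⊤*, G); (F, Δ) ⊢ G`. -/
theorem wand (hF : IdDerivable F) (hG : IdDerivable G) : IdDerivable (.wand F G) := by
  intro Γt Δ h
  obtain ⟨_, dF⟩ := hF none (.fm F) (.ofEq (.refl _))
  have hG' : Essence (osemi (some (.comma (.fm F) Δ)) (.fm G))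
      (.semi (.comma (.fm .mtop) (.fm G)) (.comma (.fm F) Δ)) :=
    .congr (.insertSemi .hole (.fm G) _ none (.ofEq (.semiComm _ _)))
      (.semiCongr (.commaComm _ _) (.refl _))
  obtain ⟨_, dG⟩ := hG _ _ hG'
  have cand : Candidate (.fm F) (.fm F) (.fm .mtop) := .inl ⟨rfl, .ofEq (.refl _)⟩
  have dFΔ := LBIZ.wandL (C := .hole) (some (.fm F)) (some (.fm .mtop)) (.fm F) Γt h
    (.inr ⟨.fm F, .fm .mtop, rfl, rfl, .inl cand⟩) dF dG
  exact ⟨_, .wandR (.equiv (.commaComm _ _) dFΔ)⟩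

end IdDerivable

theorem idDerivable (F : BI) : IdDerivable F := by
  induction F with
  | var p => exact .var p
  | top => exact .top
  | bot => exact .bot
  | mtop => exact .mtop
  | conj F G ihF ihG => exact ihF.conj ihG
  | disj F G ihF ihG => exact ihF.disj ihG
  | imp F G ihF ihG => exact ihF.imp ihG
  | star F G ihF ihG => exact ihF.star ihG
  | wand F G ihF ihG => exact ihF.wand ihG

/-- the id axiom of LBIZ generalises from propositional variables
to all formulas: E(Γ̃; F) ⊢ F is derivable in LBIZ. -/
theorem lbiz_general_id (Γt : Option Bunch) (F : BI) (Δ : Bunch)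
    (h : Essence (osemi Γt (.fm F)) Δ) :
    ∃ n, LBIZc Δ F n :=
  idDerivable F Γt Δ h
end
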